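/- arXiv:1910.03758 — 7 statements merged into one kernel-verified Lean document; each statement's English description precedes it below -/
import Mathlib

section
/- Let f : ℝ → ℝ be continuous, with f(s) = 0 for s ≤ 0 and f strictly increasing on [0, ∞). Suppose there exists δ₀ ∈ (0,1) such that ∫₀ˢ f(r) dr ≤ δ₀ · f(s) · s for all s ≥ 0. Then there exists δ₁ ∈ (0,1) such that F(s) ≥ δ₁ · s · f⁻¹(s) for all s ≥ 0, where f⁻¹ denotes the inverse of f on [0,∞) extended by 0 on (−∞,0], and F(s) = ∫₀ˢ f⁻¹(r) dr. -/
/-! Young's identity `∫₀ᵗ f + ∫₀^{f t} f⁻¹ = t f(t)`, applied at `t = f⁻¹(s)`, turns the bound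
`∫₀ᵗ f ≤ δ₀ t f(t)` into `∫₀ˢ f⁻¹ ≥ (1 - δ₀) s f⁻¹(s)`. Young's identity itself is the
fundamental theorem of calculus for `A(u) = u f(u) - ∫_{f a}^{f u} f⁻¹`, whose increments over
`[x, y]` lie between `(y - x) f(x)` and `(y - x) f(y)` because `f⁻¹` takes values in `[x, y]`
on `[f x, f y]`. -/

open Set intervalIntegral

theorem hasDerivWithinAt_of_increment_bounds {A f : ℝ → ℝ} {s : Set ℝ} {x : ℝ}
    (hx : x ∈ s) (hf : ContinuousWithinAt f s x)
    (hA : ∀ y ∈ s, ∀ z ∈ s, y ≤ z → (z - y) * f y ≤ A z - A y ∧ A z - A y ≤ (z - y) * f z) :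
    HasDerivWithinAt A (f x) s x := by
  rw [hasDerivWithinAt_iff_isLittleO, Asymptotics.isLittleO_iff]
  intro c hc
  filter_upwards [self_mem_nhdsWithin, hf.eventually (Metric.closedBall_mem_nhds (f x) hc)]
    with y hy hfy
  rw [Real.dist_eq, abs_le] at hfy
  simp only [Real.norm_eq_abs, smul_eq_mul]
  rcases le_total x y with hxy | hyx
  · obtain ⟨hlo, hhi⟩ := hA x hx y hy hxy
    rw [abs_of_nonneg (sub_nonneg.2 hxy), abs_le]
    constructor <;> nlinarith
  · obtain ⟨hlo, hhi⟩ := hA y hy x hx hyx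
    rw [abs_of_nonpos (sub_nonpos.2 hyx), abs_le]
    constructor <;> nlinarith

section LeftInverse

variable {f g : ℝ → ℝ} {a b : ℝ}

theorem mapsTo_Icc_of_leftInvOn (hf : ContinuousOn f (Icc a b)) (hgf : LeftInvOn g f (Icc a b))
    {x y : ℝ} (hx : a ≤ x) (hxy : x ≤ y) (hy : y ≤ b) :
    MapsTo g (Icc (f x) (f y)) (Icc x y) := by
  intro r hr
  obtain ⟨z, hz, rfl⟩ := intermediate_value_Icc hxy (hf.mono (Icc_subset_Icc hx hy)) hr
  rwa [hgf ⟨hx.trans hz.1, hz.2.trans hy⟩]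

theorem monotoneOn_of_leftInvOn (hab : a ≤ b) (hf : ContinuousOn f (Icc a b))
    (hgf : LeftInvOn g f (Icc a b)) : MonotoneOn g (Icc (f a) (f b)) := by
  intro r₁ hr₁ r₂ hr₂ hr
  obtain ⟨z, hz, rfl⟩ := intermediate_value_Icc hab hf hr₁
  rw [hgf hz]
  exact (mapsTo_Icc_of_leftInvOn hf hgf hz.1 hz.2 le_rfl ⟨hr, hr₂.2⟩).1

theorem intervalIntegrable_of_leftInvOn (hab : a ≤ b) (hf : ContinuousOn f (Icc a b))
    (hmono : MonotoneOn f (Icc a b)) (hgf : LeftInvOn g f (Icc a b)) :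
    IntervalIntegrable g MeasureTheory.volume (f a) (f b) := by
  refine MonotoneOn.intervalIntegrable ?_
  rw [uIcc_of_le (hmono (left_mem_Icc.2 hab) (right_mem_Icc.2 hab) hab)]
  exact monotoneOn_of_leftInvOn hab hf hgf

theorem integral_leftInv_mem_Icc (hf : ContinuousOn f (Icc a b))
    (hmono : MonotoneOn f (Icc a b)) (hgf : LeftInvOn g f (Icc a b))
    {x y : ℝ} (hx : a ≤ x) (hxy : x ≤ y) (hy : y ≤ b) :
    ∫ r in f x..f y, g r ∈ Icc (x * (f y - f x)) (y * (f y - f x)) := by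
  have hsub : Icc x y ⊆ Icc a b := Icc_subset_Icc hx hy
  have hfxy : f x ≤ f y := hmono (hsub ⟨le_rfl, hxy⟩) (hsub ⟨hxy, le_rfl⟩) hxy
  have hg_int :=
    intervalIntegrable_of_leftInvOn hxy (hf.mono hsub) (hmono.mono hsub) (hgf.mono hsub)
  have hg_mem := mapsTo_Icc_of_leftInvOn hf hgf hx hxy hy
  constructor
  · simpa [mul_comm] using integral_mono_on hfxy intervalIntegrable_const hg_int
      fun r hr => (hg_mem hr).1
  · simpa [mul_comm] using integral_mono_on hfxy hg_int intervalIntegrable_const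
      fun r hr => (hg_mem hr).2

theorem hasDerivWithinAt_mul_sub_integral_leftInv (hf : ContinuousOn f (Icc a b))
    (hmono : MonotoneOn f (Icc a b)) (hgf : LeftInvOn g f (Icc a b)) {x : ℝ} (hx : x ∈ Icc a b) :
    HasDerivWithinAt (fun u => u * f u - ∫ r in f a..f u, g r) (f x) (Icc a b) x := by
  refine hasDerivWithinAt_of_increment_bounds hx (hf x hx) fun y hy z hz hyz => ?_
  have hg_int : ∀ w ∈ Icc a b, IntervalIntegrable g MeasureTheory.volume (f a) (f w) :=
    fun w hw => intervalIntegrable_of_leftInvOn hw.1 (hf.mono (Icc_subset_Icc_right hw.2))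
      (hmono.mono (Icc_subset_Icc_right hw.2)) (hgf.mono (Icc_subset_Icc_right hw.2))
  have hsplit := integral_interval_sub_left (hg_int z hz) (hg_int y hy)
  obtain ⟨hlo, hhi⟩ := integral_leftInv_mem_Icc hf hmono hgf hy.1 hyz hz.2
  constructor <;> linarith

theorem integral_add_integral_of_leftInvOn (hab : a ≤ b) (hf : ContinuousOn f (Icc a b))
    (hmono : MonotoneOn f (Icc a b)) (hgf : LeftInvOn g f (Icc a b)) :
    (∫ x in a..b, f x) + ∫ y in f a..f b, g y = b * f b - a * f a := by
  have hderiv := fun x hx => hasDerivWithinAt_mul_sub_integral_leftInv hf hmono hgf (x := x) hx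
  have hFTC := integral_eq_sub_of_hasDerivAt_of_le hab
    (fun x hx => (hderiv x hx).continuousWithinAt)
    (fun x hx => (hderiv x (Ioo_subset_Icc_self hx)).hasDerivAt (Icc_mem_nhds hx.1 hx.2))
    (hf.intervalIntegrable_of_Icc hab)
  rw [hFTC, integral_same, sub_zero]
  ring

end LeftInverse

theorem stmt0_general (f g : ℝ → ℝ)
    (hf_cont : Continuous f)
    (hf_neg : ∀ s ≤ (0 : ℝ), f s = 0)
    (hf_mono : StrictMonoOn f (Ici 0))
    (hg_left : ∀ s ≥ (0 : ℝ), g (f s) = s)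
    (hg_right : ∀ s ≥ (0 : ℝ), f (g s) = s)
    (hH2 : ∃ δ₀ ∈ Ioo (0 : ℝ) 1, ∀ s ≥ (0 : ℝ),
      (∫ r in (0 : ℝ)..s, f r) ≤ δ₀ * f s * s) :
    ∃ δ₁ ∈ Ioo (0 : ℝ) 1, ∀ s ≥ (0 : ℝ),
      (∫ r in (0 : ℝ)..s, g r) ≥ δ₁ * s * g s := by
  obtain ⟨δ₀, ⟨hδ₀_pos, hδ₀_lt⟩, hH2⟩ := hH2
  have hf0 : f 0 = 0 := hf_neg 0 le_rfl
  refine ⟨1 - δ₀, ⟨by linarith, by linarith⟩, fun s hs => ?_⟩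
  have hgs : 0 ≤ g s := by
    by_contra! hneg
    have hs0 : s = 0 := by rw [← hg_right s hs, hf_neg _ hneg.le]
    have hg0 : g 0 = 0 := by simpa [hf0] using hg_left 0 le_rfl
    rw [hs0, hg0] at hneg
    exact hneg.false
  have hyoung := integral_add_integral_of_leftInvOn hgs hf_cont.continuousOn
    (hf_mono.monotoneOn.mono Icc_subset_Ici_self) fun x hx => hg_left x hx.1
  rw [hf0, hg_right s hs] at hyoung
  have hbound := hH2 (g s) hgs
  rw [hg_right s hs] at hbound
  linarith

/-- (H2) implies (H2)': if `f` is continuous, vanishes on `(-∞,0]`, is strictly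
increasing on `[0,∞)`, and `∫₀ˢ f ≤ δ₀ f(s) s` for all `s ≥ 0` with `δ₀ ∈ (0,1)`,
then there is `δ₁ ∈ (0,1)` with `F(s) ≥ δ₁ s f⁻¹(s)` for all `s ≥ 0`, where
`g = f⁻¹` is the inverse of `f` on `[0,∞)` extended by `0` on `(-∞,0]` and
`F(s) = ∫₀ˢ g`. -/
theorem stmt0 (f g : ℝ → ℝ)
    (hf_cont : Continuous f)
    (hf_neg : ∀ s ≤ (0 : ℝ), f s = 0)
    (hf_mono : StrictMonoOn f (Ici 0))
    (hg_neg : ∀ s ≤ (0 : ℝ), g s = 0)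
    (hg_left : ∀ s ≥ (0 : ℝ), g (f s) = s)
    (hg_right : ∀ s ≥ (0 : ℝ), f (g s) = s)
    (hH2 : ∃ δ₀ ∈ Ioo (0 : ℝ) 1, ∀ s ≥ (0 : ℝ),
      (∫ r in (0 : ℝ)..s, f r) ≤ δ₀ * f s * s) :
    ∃ δ₁ ∈ Ioo (0 : ℝ) 1, ∀ s ≥ (0 : ℝ),
      (∫ r in (0 : ℝ)..s, g r) ≥ δ₁ * s * g s :=
  stmt0_general f g hf_cont hf_neg hf_mono hg_left hg_right hH2
end

section
/- Let f : ℝ → ℝ be continuous, f(s) = 0 for s ≤ 0, f strictly increasing on [0,∞), and suppose there exists δ₀ ∈ (0,1) with ∫₀ˢ f(r) dr ≤ δ₀ f(s) s for all s ≥ 0. Then f(s) → +∞ as s → +∞. -/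
/-!
If `f ≤ M` on `[0, ∞)`, then for `0 ≤ a ≤ s` monotonicity and (H2) give
`f a * (s - a) ≤ ∫ a..s f ≤ ∫ 0..s f ≤ δ₀ * M * s`, and letting `s → ∞` yields `f a ≤ δ₀ * M`.
So `δ₀ * sup f` is again an upper bound, which is impossible for `δ₀ < 1` and `sup f ≥ f 1 > 0`.
-/

open Set Filter

theorem le_of_forall_mul_sub_le_mul {x y a : ℝ} (h : ∀ s ≥ a, x * (s - a) ≤ y * s) : x ≤ y := by
  by_contra! hyx
  obtain ⟨s, hs⟩ := exists_gt (max a (x * a / (x - y)))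
  have hxa : x * a < (x - y) * s := (div_lt_iff₀' (sub_pos.2 hyx)).1 (le_max_right _ _ |>.trans_lt hs)
  linarith [h s (le_max_left _ _ |>.trans hs.le)]

theorem MonotoneOn.mul_sub_le_intervalIntegral {f : ℝ → ℝ} {a b : ℝ}
    (hf : MonotoneOn f (Icc a b)) (hab : a ≤ b) : f a * (b - a) ≤ ∫ r in a..b, f r := by
  calc f a * (b - a) = ∫ _ in a..b, f a := by simp [mul_comm]
    _ ≤ ∫ r in a..b, f r :=
      intervalIntegral.integral_mono_on hab intervalIntegrable_const
        (uIcc_of_le hab ▸ hf).intervalIntegrable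
        fun r hr => hf (left_mem_Icc.2 hab) hr hr.1

theorem MonotoneOn.tendsto_atTop_of_not_bddAbove {α β : Type*} [Preorder α] [LinearOrder β]
    {f : α → β} {a : α} (hf : MonotoneOn f (Ici a)) (h : ¬BddAbove (f '' Ici a)) :
    Tendsto f atTop atTop := by
  refine tendsto_atTop.2 fun b => ?_
  obtain ⟨_, ⟨x, hx, rfl⟩, hbx⟩ := not_bddAbove_iff.1 h b
  filter_upwards [eventually_ge_atTop x] with y hxy
  exact hbx.le.trans (hf hx (mem_Ici.2 (hx.trans hxy)) hxy)

theorem le_mul_of_integral_le_mul {f : ℝ → ℝ} {δ M : ℝ} (hδ : 0 ≤ δ) (hf : MonotoneOn f (Ici 0))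
    (hf_nonneg : ∀ s ≥ 0, 0 ≤ f s) (hM : ∀ s ≥ 0, f s ≤ M)
    (hH2 : ∀ s ≥ (0 : ℝ), (∫ r in (0 : ℝ)..s, f r) ≤ δ * f s * s) {a : ℝ} (ha : 0 ≤ a) :
    f a ≤ δ * M := by
  refine le_of_forall_mul_sub_le_mul (a := a) fun s has => ?_
  have hs : 0 ≤ s := ha.trans has
  have hfs : MonotoneOn f (Icc 0 s) := hf.mono Icc_subset_Ici_self
  calc f a * (s - a)
      ≤ ∫ r in a..s, f r := (hfs.mono (Icc_subset_Icc_left ha)).mul_sub_le_intervalIntegral has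
    _ ≤ ∫ r in (0 : ℝ)..s, f r :=
      intervalIntegral.integral_mono_interval ha has le_rfl
        (MeasureTheory.ae_restrict_of_forall_mem measurableSet_Ioc fun r hr => hf_nonneg r hr.1.le)
        (uIcc_of_le hs ▸ hfs).intervalIntegrable
    _ ≤ δ * f s * s := hH2 s hs
    _ ≤ δ * M * s := by gcongr; exact hM s hs

theorem stmt1_general (f : ℝ → ℝ)
    (hf_neg : ∀ s ≤ (0 : ℝ), f s = 0)
    (hf_mono : StrictMonoOn f (Ici 0))
    (hH2 : ∃ δ₀ ∈ Ioo (0 : ℝ) 1, ∀ s ≥ (0 : ℝ),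
      (∫ r in (0 : ℝ)..s, f r) ≤ δ₀ * f s * s) :
    Tendsto f atTop atTop := by
  obtain ⟨δ₀, ⟨hδ0, hδ1⟩, hH2⟩ := hH2
  have hf0 : f 0 = 0 := hf_neg 0 le_rfl
  have hf1 : 0 < f 1 := hf0 ▸ hf_mono self_mem_Ici (mem_Ici.2 zero_le_one) one_pos
  have hf_nonneg : ∀ s ≥ 0, 0 ≤ f s := fun s hs =>
    hf0 ▸ hf_mono.monotoneOn self_mem_Ici (mem_Ici.2 hs) hs
  refine hf_mono.monotoneOn.tendsto_atTop_of_not_bddAbove fun hbdd => ?_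
  have hM : ∀ s ≥ 0, f s ≤ sSup (f '' Ici 0) := fun s hs => le_csSup hbdd (mem_image_of_mem f hs)
  have hMδ : sSup (f '' Ici 0) ≤ δ₀ * sSup (f '' Ici 0) :=
    csSup_le (nonempty_Ici.image f) <| forall_mem_image.2 fun a ha =>
      le_mul_of_integral_le_mul hδ0.le hf_mono.monotoneOn hf_nonneg hM hH2 ha
  nlinarith [hM 1 zero_le_one]

/-- (H1)+(H2) imply `f(s) → +∞` as `s → +∞`. -/
theorem stmt1 (f : ℝ → ℝ)
    (hf_cont : Continuous f)
    (hf_neg : ∀ s ≤ (0 : ℝ), f s = 0)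
    (hf_mono : StrictMonoOn f (Ici 0))
    (hH2 : ∃ δ₀ ∈ Ioo (0 : ℝ) 1, ∀ s ≥ (0 : ℝ),
      (∫ r in (0 : ℝ)..s, f r) ≤ δ₀ * f s * s) :
    Tendsto f atTop atTop :=
  stmt1_general f hf_neg hf_mono hH2
end

section
/- Let f : ℝ → ℝ be continuous, strictly increasing on [0,∞) with f(0)=0 and f(s) → ∞ as s → ∞. If for every τ > 0 one has f(s)·e^{−τs} → 0 as s → +∞, then for every τ > 0 one has τ·f⁻¹(s) − ln s → +∞ as s → +∞, where f⁻¹ is the inverse of f on [0,∞). -/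
open Set Filter Real

/-! For large `s`, `f s < exp (τ s / 2)`, and `g → ∞`, so `t = f (g t) < exp (τ g(t) / 2)` for
large `t`; hence `τ g(t) - log t > τ g(t) / 2 → ∞`. -/

lemma tendsto_atTop_of_monotoneOn_of_rightInvOn {f g : ℝ → ℝ} (hf : MonotoneOn f (Ici 0))
    (hg_nonneg : ∀ s ≥ (0 : ℝ), g s ≥ 0) (hg : ∀ s ≥ (0 : ℝ), f (g s) = s) :
    Tendsto g atTop atTop := by
  refine tendsto_atTop.2 fun M => ?_
  filter_upwards [eventually_gt_atTop (max (f (max M 0)) 0)] with t ht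
  have ht0 : 0 ≤ t := (le_max_right _ _).trans ht.le
  by_contra! hgt
  have : t ≤ f (max M 0) :=
    calc t = f (g t) := (hg t ht0).symm
      _ ≤ f (max M 0) := hf (hg_nonneg t ht0) (le_max_right M 0) (hgt.le.trans (le_max_left M 0))
  linarith [le_max_left (f (max M 0)) 0]

lemma eventually_lt_exp_of_tendsto_mul_exp_neg {f : ℝ → ℝ} {τ : ℝ}
    (h : Tendsto (fun s => f s * exp (-τ * s)) atTop (nhds 0)) :
    ∀ᶠ s in atTop, f s < exp (τ * s) := by
  filter_upwards [h.eventually_lt_const one_pos] with s hs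
  rwa [neg_mul, exp_neg, ← div_eq_mul_inv, div_lt_one (exp_pos _)] at hs

theorem stmt2_general (f g : ℝ → ℝ)
    (hf_mono : StrictMonoOn f (Ici 0))
    (hg_nonneg : ∀ s ≥ (0 : ℝ), g s ≥ 0)
    (hg_right : ∀ s ≥ (0 : ℝ), f (g s) = s)
    (hH3 : ∀ τ > (0 : ℝ), Tendsto (fun s => f s * Real.exp (-τ * s)) atTop (nhds 0)) :
    ∀ τ > (0 : ℝ), Tendsto (fun s => τ * g s - Real.log s) atTop atTop := by
  intro τ hτ
  have hg_top := tendsto_atTop_of_monotoneOn_of_rightInvOn hf_mono.monotoneOn hg_nonneg hg_right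
  have hlog : ∀ᶠ t in atTop, log t < τ / 2 * g t := by
    filter_upwards [hg_top.eventually (eventually_lt_exp_of_tendsto_mul_exp_neg (hH3 _ (half_pos hτ))),
      eventually_gt_atTop 0] with t ht ht0
    rw [hg_right t ht0.le] at ht
    exact (log_lt_iff_lt_exp ht0).2 ht
  refine tendsto_atTop_mono' atTop ?_ (hg_top.const_mul_atTop (half_pos hτ))
  filter_upwards [hlog] with t ht
  linarith

/-- (H3) implies `τ f⁻¹(s) - ln s → +∞` as `s → +∞`, for every `τ > 0`. Here
`g = f⁻¹` is the inverse on `[0,∞)` of the continuous strictly increasing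
function `f` with `f(0) = 0` and `f(s) → ∞`. -/
theorem stmt2 (f g : ℝ → ℝ)
    (hf_cont : Continuous f)
    (hf_mono : StrictMonoOn f (Ici 0))
    (hf0 : f 0 = 0)
    (hf_top : Tendsto f atTop atTop)
    (hg_nonneg : ∀ s ≥ (0 : ℝ), g s ≥ 0)
    (hg_left : ∀ s ≥ (0 : ℝ), g (f s) = s)
    (hg_right : ∀ s ≥ (0 : ℝ), f (g s) = s)
    (hH3 : ∀ τ > (0 : ℝ), Tendsto (fun s => f s * Real.exp (-τ * s)) atTop (nhds 0)) :
    ∀ τ > (0 : ℝ), Tendsto (fun s => τ * g s - Real.log s) atTop atTop :=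
  stmt2_general f g hf_mono hg_nonneg hg_right hH3
end

section
/- (Upper energy bound via rearrangement) Let D ⊂ ℝ² be bounded, ε > 0, Λ ≥ 1, κ > 0 fixed. Then there exists C > 0 independent of ε such that for all ω ∈ A_{ε} = {ω ∈ L^∞(D) : 0 ≤ ω ≤ Λ/ε², ∫_D ω = κ}, ∫_D∫_D ln(1/|x−y|) ω(x)ω(y) dxdy ≤ κ² ln(1/ε) + C. -/
/-!
Threshold the kernel at level `ε`: `log (1/|x - y|) ≤ log (1/ε) + log⁺ (ε/|x - y|)`, and the
excess is supported in the ball `B_ε(x)`. A density `0 ≤ ω ≤ Λ/ε²` of mass `κ` therefore gains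
at most `(Λ/ε²) ∫ log⁺ (ε/|z|) dz = Λ ∫ log⁺ (1/|z|) dz` over `κ log (1/ε)`, by scaling
`z ↦ ε z`. This is the bathtub principle with the extremal radius replaced by `ε`, which only
changes the constant. Integrating against `ω(x)` once more gives `κ² log (1/ε) + κΛ ∫ log⁺ (1/|z|)`.
-/

open Set Filter MeasureTheory Real Metric

namespace Real

theorem posLog_inv_le_rpow_neg_div {t a : ℝ} (ht : 0 ≤ t) (ha : 0 < a) :
    log⁺ t⁻¹ ≤ t ^ (-a) / a := by
  rw [posLog_apply, rpow_neg ht, ← inv_rpow ht]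
  exact max_le (by positivity) (log_le_rpow_div (inv_nonneg.2 ht) ha)

theorem abs_log_le_posLog_add_posLog_inv (t : ℝ) : |log t| ≤ log⁺ t + log⁺ t⁻¹ := by
  have h := posLog_sub_posLog_inv (x := t)
  have h₁ : 0 ≤ log⁺ t := posLog_nonneg
  have h₂ : 0 ≤ log⁺ t⁻¹ := posLog_nonneg
  exact abs_le.2 ⟨by linarith, by linarith⟩

theorem log_one_div_le_add_posLog_div {d ε : ℝ} (hd : 0 < d) (hε : 0 < ε) :
    log (1 / d) ≤ log (1 / ε) + log⁺ (ε / d) := by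
  have h : log (ε / d) ≤ log⁺ (ε / d) := le_max_right _ _
  rw [one_div, one_div, log_inv, log_inv]
  linarith [log_div hε.ne' hd.ne']

end Real

-- The linear form of the bathtub principle: `f ω ≤ (L + g) ω ≤ L ω + M g`.
theorem integral_mul_le_of_le_add {α : Type*} [MeasurableSpace α] {μ : Measure α}
    {f g ω : α → ℝ} {L M : ℝ} (hfω : Integrable (fun y => f y * ω y) μ) (hω : Integrable ω μ)
    (hg : Integrable g μ) (hfg : ∀ᵐ y ∂μ, f y ≤ L + g y) (hg₀ : 0 ≤ᵐ[μ] g)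
    (hωM : ∀ᵐ y ∂μ, 0 ≤ ω y ∧ ω y ≤ M) :
    ∫ y, f y * ω y ∂μ ≤ L * ∫ y, ω y ∂μ + M * ∫ y, g y ∂μ := by
  rw [← integral_const_mul, ← integral_const_mul,
    ← integral_add (hω.const_mul L) (hg.const_mul M)]
  refine integral_mono_ae hfω ((hω.const_mul L).add (hg.const_mul M)) ?_
  filter_upwards [hfg, hg₀, hωM] with y hfy hgy ⟨hω₀, hωy⟩
  calc f y * ω y ≤ (L + g y) * ω y := mul_le_mul_of_nonneg_right hfy hω₀
    _ ≤ L * ω y + M * g y := by nlinarith [mul_le_mul_of_nonneg_left hωy hgy]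

theorem integrableOn_of_ae_nonneg_le {α : Type*} [MeasurableSpace α] {μ : Measure α}
    {s : Set α} {ω : α → ℝ} {M : ℝ} (hs : μ s ≠ ⊤) (hω : AEStronglyMeasurable ω μ)
    (hωM : ∀ᵐ y ∂μ.restrict s, 0 ≤ ω y ∧ ω y ≤ M) : IntegrableOn ω s μ :=
  Measure.integrableOn_of_bounded hs hω <| by
    filter_upwards [hωM] with y hy
    rw [norm_of_nonneg hy.1]
    exact hy.2

theorem posLog_norm_inv_smul_inv {E : Type*} [SeminormedAddCommGroup E] [NormedSpace ℝ E]
    {ε : ℝ} (hε : 0 ≤ ε) (z : E) : log⁺ ‖ε⁻¹ • z‖⁻¹ = log⁺ (ε / ‖z‖) := by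
  rw [norm_smul, norm_inv, norm_of_nonneg hε, mul_inv, inv_inv, div_eq_mul_inv]

theorem ae_norm_log_one_div_dist_mul_le {E : Type*} [SeminormedAddCommGroup E]
    [MeasurableSpace E] {μ : Measure E} {D : Set E} {ω : E → ℝ} {M : ℝ} {x : E}
    (hDm : MeasurableSet D) (hD : Bornology.IsBounded D)
    (hωM : ∀ᵐ y ∂μ.restrict D, 0 ≤ ω y ∧ ω y ≤ M) (hx : x ∈ D) :
    ∀ᵐ y ∂μ.restrict D,
      ‖log (1 / dist x y) * ω y‖ ≤ M * (log⁺ ‖y - x‖⁻¹ + log⁺ (diam D)) := by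
  filter_upwards [hωM, ae_restrict_mem hDm] with y ⟨hω₀, hωy⟩ hy
  have hlog : |log (1 / dist x y)| ≤ log⁺ ‖y - x‖⁻¹ + log⁺ (diam D) := by
    rw [one_div, log_inv, abs_neg, dist_comm, dist_eq_norm]
    have := posLog_le_posLog (norm_nonneg _) (dist_eq_norm y x ▸ dist_le_diam_of_mem hD hy hx)
    linarith [abs_log_le_posLog_add_posLog_inv ‖y - x‖]
  rw [norm_mul, norm_of_nonneg hω₀, norm_eq_abs, mul_comm M]
  exact mul_le_mul hlog hωy hω₀ (add_nonneg posLog_nonneg posLog_nonneg)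

section HaarSpace

variable {E : Type*} [NormedAddCommGroup E] [NormedSpace ℝ E] [FiniteDimensional ℝ E]
  [MeasurableSpace E] [BorelSpace E] (μ : Measure E) [μ.IsAddHaarMeasure]

theorem integrable_posLog_inv_norm [Nontrivial E] : Integrable (fun z : E => log⁺ ‖z‖⁻¹) μ := by
  have hdim : 1 ≤ Module.finrank ℝ E := Module.finrank_pos
  have hloc : LocallyIntegrable (fun z : E => log⁺ ‖z‖⁻¹) μ := by
    refine locallyIntegrable_of_norm_le_rpow (C := 2) (α := 1 / 2) hdim
      (lt_of_lt_of_le (by norm_num) (Nat.one_le_cast.2 hdim)) (Eventually.of_forall fun z => ?_)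
      (by fun_prop)
    rw [norm_of_nonneg posLog_nonneg]
    linarith [posLog_inv_le_rpow_neg_div (norm_nonneg z) (one_half_pos (α := ℝ))]
  refine (hloc.integrableOn_isCompact (isCompact_closedBall 0 1))
    |>.integrable_of_forall_notMem_eq_zero fun z hz => ?_
  rw [mem_closedBall_zero_iff, not_le] at hz
  rw [posLog_eq_zero_iff, abs_of_nonneg (by positivity)]
  exact inv_le_one_of_one_le₀ hz.le

theorem integrable_posLog_div_norm_sub [Nontrivial E] (x : E) {ε : ℝ} (hε : 0 < ε) :
    Integrable (fun y => log⁺ (ε / ‖y - x‖)) μ := by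
  simpa only [posLog_norm_inv_smul_inv hε.le] using
    ((integrable_posLog_inv_norm μ).comp_smul (inv_ne_zero hε.ne')).comp_sub_right x

theorem integral_posLog_div_norm_sub (x : E) {ε : ℝ} (hε : 0 < ε) :
    ∫ y, log⁺ (ε / ‖y - x‖) ∂μ = ε ^ Module.finrank ℝ E * ∫ z, log⁺ ‖z‖⁻¹ ∂μ := by
  rw [integral_sub_right_eq_self (fun z => log⁺ (ε / ‖z‖)) x, ← smul_eq_mul,
    ← Measure.integral_comp_inv_smul_of_nonneg μ _ hε.le]
  simp only [posLog_norm_inv_smul_inv hε.le]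

variable {μ} [Nontrivial E] {D : Set E} {ω : E → ℝ} {M : ℝ} {x : E}

theorem integrableOn_posLog_inv_norm_sub_add_const (hD : Bornology.IsBounded D) (x : E)
    (c : ℝ) :
    IntegrableOn (fun y => log⁺ ‖y - x‖⁻¹ + c) D μ :=
  ((integrable_posLog_inv_norm μ).comp_sub_right x).integrableOn.add
    (integrableOn_const hD.measure_lt_top.ne)

theorem integrableOn_log_one_div_dist_mul (hDm : MeasurableSet D) (hD : Bornology.IsBounded D)
    (hω : Measurable ω) (hωM : ∀ᵐ y ∂μ.restrict D, 0 ≤ ω y ∧ ω y ≤ M) (hx : x ∈ D) :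
    IntegrableOn (fun y => log (1 / dist x y) * ω y) D μ :=
  Integrable.mono' ((integrableOn_posLog_inv_norm_sub_add_const hD x _).const_mul M)
    (by fun_prop) (ae_norm_log_one_div_dist_mul_le hDm hD hωM hx)

theorem norm_setIntegral_log_one_div_dist_mul_le (hDm : MeasurableSet D)
    (hD : Bornology.IsBounded D) (hM : 0 ≤ M) (hωM : ∀ᵐ y ∂μ.restrict D, 0 ≤ ω y ∧ ω y ≤ M)
    (hx : x ∈ D) :
    ‖∫ y in D, log (1 / dist x y) * ω y ∂μ‖ ≤
      M * (∫ z, log⁺ ‖z‖⁻¹ ∂μ + log⁺ (diam D) * μ.real D) := by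
  have hP := (integrable_posLog_inv_norm μ).comp_sub_right x
  calc ‖∫ y in D, log (1 / dist x y) * ω y ∂μ‖
      ≤ ∫ y in D, M * (log⁺ ‖y - x‖⁻¹ + log⁺ (diam D)) ∂μ :=
        norm_integral_le_of_norm_le
          ((integrableOn_posLog_inv_norm_sub_add_const hD x _).const_mul M)
          (ae_norm_log_one_div_dist_mul_le hDm hD hωM hx)
    _ = M * (∫ y in D, log⁺ ‖y - x‖⁻¹ ∂μ + log⁺ (diam D) * μ.real D) := by
        rw [integral_const_mul, integral_add hP.integrableOn
          (integrableOn_const hD.measure_lt_top.ne), setIntegral_const, smul_eq_mul,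
          mul_comm (μ.real D)]
    _ ≤ M * (∫ z, log⁺ ‖z‖⁻¹ ∂μ + log⁺ (diam D) * μ.real D) := by
        grw [setIntegral_le_integral hP (Eventually.of_forall fun _ => posLog_nonneg),
          integral_sub_right_eq_self (fun z => log⁺ ‖z‖⁻¹) x]

theorem setIntegral_log_one_div_dist_mul_le (hDm : MeasurableSet D) (hD : Bornology.IsBounded D)
    (hω : Measurable ω) (hM : 0 ≤ M) (hωM : ∀ᵐ y ∂μ.restrict D, 0 ≤ ω y ∧ ω y ≤ M) (hx : x ∈ D)
    {ε : ℝ} (hε : 0 < ε) :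
    ∫ y in D, log (1 / dist x y) * ω y ∂μ ≤
      log (1 / ε) * ∫ y in D, ω y ∂μ + M * ε ^ Module.finrank ℝ E * ∫ z, log⁺ ‖z‖⁻¹ ∂μ := by
  have hg := integrable_posLog_div_norm_sub μ x hε
  have hthreshold :
      ∀ᵐ y ∂μ.restrict D, log (1 / dist x y) ≤ log (1 / ε) + log⁺ (ε / ‖y - x‖) := by
    filter_upwards [ae_restrict_of_ae (μ.ae_ne x)] with y hy
    rw [dist_comm, dist_eq_norm]
    exact log_one_div_le_add_posLog_div (norm_pos_iff.2 (sub_ne_zero.2 hy)) hε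
  calc ∫ y in D, log (1 / dist x y) * ω y ∂μ
      ≤ log (1 / ε) * ∫ y in D, ω y ∂μ + M * ∫ y in D, log⁺ (ε / ‖y - x‖) ∂μ :=
        integral_mul_le_of_le_add (integrableOn_log_one_div_dist_mul hDm hD hω hωM hx)
          (integrableOn_of_ae_nonneg_le hD.measure_lt_top.ne hω.aestronglyMeasurable hωM)
          hg.integrableOn hthreshold (Eventually.of_forall fun _ => posLog_nonneg) hωM
    _ ≤ log (1 / ε) * ∫ y in D, ω y ∂μ + M * ε ^ Module.finrank ℝ E * ∫ z, log⁺ ‖z‖⁻¹ ∂μ := by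
        grw [mul_assoc, ← integral_posLog_div_norm_sub μ x hε,
          setIntegral_le_integral hg (Eventually.of_forall fun _ => posLog_nonneg)]

theorem setIntegral_setIntegral_log_one_div_dist_mul_le (hDm : MeasurableSet D)
    (hD : Bornology.IsBounded D) (hω : Measurable ω) (hM : 0 ≤ M)
    (hωM : ∀ᵐ y ∂μ.restrict D, 0 ≤ ω y ∧ ω y ≤ M) {ε : ℝ} (hε : 0 < ε) :
    ∫ x in D, ∫ y in D, log (1 / dist x y) * ω x * ω y ∂μ ∂μ ≤ (∫ x in D, ω x ∂μ) *
      (log (1 / ε) * ∫ y in D, ω y ∂μ + M * ε ^ Module.finrank ℝ E * ∫ z, log⁺ ‖z‖⁻¹ ∂μ) := by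
  set I : E → ℝ := fun x => ∫ y in D, log (1 / dist x y) * ω y ∂μ
  have hfactor : ∀ x, ∫ y in D, log (1 / dist x y) * ω x * ω y ∂μ = ω x * I x := fun x => by
    rw [← integral_const_mul]
    congr with y
    ring
  have hI : StronglyMeasurable I :=
    StronglyMeasurable.integral_prod_right' (f := fun p : E × E => log (1 / dist p.1 p.2) * ω p.2)
      (by fun_prop)
  have hωI : IntegrableOn (fun x => ω x * I x) D μ :=
    Measure.integrableOn_of_bounded hD.measure_lt_top.ne
      (hω.aestronglyMeasurable.mul hI.aestronglyMeasurable) <| by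
      filter_upwards [hωM, ae_restrict_mem hDm] with x ⟨hω₀, hωx⟩ hx
      rw [norm_mul, norm_of_nonneg hω₀]
      exact mul_le_mul hωx (norm_setIntegral_log_one_div_dist_mul_le hDm hD hM hωM hx)
        (norm_nonneg _) hM
  simp_rw [hfactor]
  rw [← integral_mul_const]
  have hω_int := integrableOn_of_ae_nonneg_le hD.measure_lt_top.ne hω.aestronglyMeasurable hωM
  refine integral_mono_ae hωI (hω_int.mul_const _) ?_
  filter_upwards [hωM, ae_restrict_mem hDm] with x hωx hx
  exact mul_le_mul_of_nonneg_left
    (setIntegral_log_one_div_dist_mul_le hDm hD hω hM hωM hx hε) hωx.1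

end HaarSpace

/-- Upper energy bound via rearrangement: for `D ⊂ ℝ²` bounded, `Λ ≥ 1`, `κ > 0`
fixed, there is `C > 0` independent of `ε` such that for all `ε > 0` and all
`ω ∈ A_ε = {0 ≤ ω ≤ Λ/ε², ∫_D ω = κ}`,
`∫∫ ln(1/|x-y|) ω(x) ω(y) dxdy ≤ κ² ln(1/ε) + C`. -/
theorem stmt9 (D : Set (EuclideanSpace ℝ (Fin 2)))
    (hD_meas : MeasurableSet D) (hD_bdd : Bornology.IsBounded D)
    (Λ κ : ℝ) (hΛ : 1 ≤ Λ) (hκ : 0 < κ) :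
    ∃ C > (0 : ℝ), ∀ ε > (0 : ℝ), ∀ ω : EuclideanSpace ℝ (Fin 2) → ℝ,
      Measurable ω →
      (∀ᵐ x ∂(volume.restrict D), 0 ≤ ω x ∧ ω x ≤ Λ / ε ^ 2) →
      (∫ x in D, ω x = κ) →
      (∫ x in D, ∫ y in D, Real.log (1 / dist x y) * ω x * ω y)
        ≤ κ ^ 2 * Real.log (1 / ε) + C := by
  set K := ∫ z : EuclideanSpace ℝ (Fin 2), log⁺ ‖z‖⁻¹
  have hK : 0 ≤ K := integral_nonneg fun _ => posLog_nonneg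
  refine ⟨κ * Λ * K + 1, by positivity, fun ε hε ω hω hωM hmass => ?_⟩
  have hM : 0 ≤ Λ / ε ^ 2 := by positivity
  have h := setIntegral_setIntegral_log_one_div_dist_mul_le hD_meas hD_bdd hω hM hωM hε
  rw [hmass, finrank_euclideanSpace_fin, div_mul_cancel₀ _ (pow_ne_zero 2 hε.ne')] at h
  linarith
end

section
/- (Concentration lemma) Let D ⊂ ℝ² be bounded, Ω ⊂ D, 0 < ε < 1, A ≥ 0, and Γ ∈ L¹(D) nonnegative with ∫_D Γ = 1 and ‖Γ‖_{L^p(D)} ≤ C₁ ε^{−2(1−1/p)} for some 1 < p ≤ ∞ and C₁ > 0. Suppose that for every x ∈ Ω, (1−A)·ln(1/ε) ≤ ∫_D ln(1/|x−y|) Γ(y) dy + C₂ for a constant C₂ > 0. Then there exists R > 1, depending only on C₁, C₂, p and diam(D) but not on A or ε, such that diam(Ω) ≤ R·ε^{1−2A}. -/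
/-!
Let `ν` be the probability measure `Γ dy` on `D`. Hölder's inequality turns the `Lᵖ` bound into
`ν (B(x, s)) ≤ C₁ π^τ (s / ε)^(2τ)` with `τ = 1 - 1/p`, and summing this over the dyadic balls
`B(x, ε 2⁻ᵏ)` bounds `∫ log⁺ (ε / |x - y|) dν(y)` by a constant `C₃` independent of `ε` and `A`.
Since `log (1/|x - y|) = log (1/ε) + log (ε/|x - y|)` and the second term is at most `-c` outside
`B(x, ε eᶜ)`, the potential bound at `x ∈ Ω` leaves less than half of the mass of `ν` outside the
ball of radius `ρ = e^(2(C₂ + C₃) + 1) ε^(1 - 2A)` about `x`. Two such balls centred in `Ω` must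
therefore meet, so `diam Ω ≤ 2ρ`.
-/

open Set Filter MeasureTheory Real Metric
open scoped ENNReal

theorem one_div_toReal_le_one {p : ℝ≥0∞} (hp : 1 ≤ p) : 1 / p.toReal ≤ 1 := by
  rcases eq_or_ne p ⊤ with rfl | hp'
  · simp
  exact div_le_one_of_le₀ (by simpa using ENNReal.toReal_mono hp' hp) ENNReal.toReal_nonneg

theorem one_div_toReal_lt_one {p : ℝ≥0∞} (hp : 1 < p) : 1 / p.toReal < 1 := by
  rcases eq_or_ne p ⊤ with rfl | hp'
  · simp
  have : 1 < p.toReal := by simpa using ENNReal.toReal_strict_mono hp' hp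
  rwa [div_lt_one (by linarith)]

section Integral

variable {α : Type*} [MeasurableSpace α] {μ : Measure α} {f : α → ℝ}

theorem isProbabilityMeasure_withDensity_ofReal (hf0 : 0 ≤ᵐ[μ] f) (hf1 : ∫ a, f a ∂μ = 1) :
    IsProbabilityMeasure (μ.withDensity fun a => ENNReal.ofReal (f a)) := by
  constructor
  rw [withDensity_apply _ MeasurableSet.univ, Measure.restrict_univ,
    ← ofReal_integral_eq_lintegral_ofReal (Integrable.of_integral_ne_zero (by simp [hf1])) hf0,
    hf1, ENNReal.ofReal_one]

theorem integral_withDensity_ofReal (hfm : Measurable f) (hf0 : 0 ≤ᵐ[μ] f) (g : α → ℝ) :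
    ∫ a, g a ∂μ.withDensity (fun a => ENNReal.ofReal (f a)) = ∫ a, g a * f a ∂μ := by
  rw [integral_withDensity_eq_integral_toReal_smul (f := fun a => ENNReal.ofReal (f a))
    (ENNReal.measurable_ofReal.comp hfm) (ae_of_all _ fun _ => ENNReal.ofReal_lt_top)]
  refine integral_congr_ae ?_
  filter_upwards [hf0] with a ha
  rw [ENNReal.toReal_ofReal ha, smul_eq_mul, mul_comm]

theorem setLIntegral_ofReal_le_eLpNorm_mul_measure_rpow (hf : AEStronglyMeasurable f μ)
    {p : ℝ≥0∞} (hp : 1 ≤ p) (s : Set α) :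
    ∫⁻ a in s, ENNReal.ofReal (f a) ∂μ ≤ eLpNorm f p μ * μ s ^ (1 - 1 / p.toReal) := by
  calc ∫⁻ a in s, ENNReal.ofReal (f a) ∂μ ≤ eLpNorm f 1 (μ.restrict s) := by
        rw [eLpNorm_one_eq_lintegral_enorm]
        exact lintegral_mono fun a => ofReal_le_enorm _
    _ ≤ eLpNorm f p (μ.restrict s) *
          (μ.restrict s) univ ^ (1 / (1 : ℝ≥0∞).toReal - 1 / p.toReal) :=
        eLpNorm_le_eLpNorm_mul_rpow_measure_univ hp hf.restrict
    _ ≤ eLpNorm f p μ * μ s ^ (1 - 1 / p.toReal) := by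
        rw [Measure.restrict_apply_univ, ENNReal.toReal_one, div_one]
        gcongr
        exact Measure.restrict_le_self

theorem integrable_and_integral_le_of_lintegral_ofReal_le (hf : AEStronglyMeasurable f μ)
    (hf0 : 0 ≤ᵐ[μ] f) {B : ℝ} (hB : 0 ≤ B) (h : ∫⁻ a, ENNReal.ofReal (f a) ∂μ ≤ ENNReal.ofReal B) :
    Integrable f μ ∧ ∫ a, f a ∂μ ≤ B := by
  refine ⟨⟨hf, (hasFiniteIntegral_iff_ofReal hf0).2 (h.trans_lt ENNReal.ofReal_lt_top)⟩, ?_⟩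
  rw [integral_eq_lintegral_of_nonneg_ae hf0 hf]
  exact ENNReal.toReal_le_of_le_ofReal hB h

end Integral

theorem ofReal_posLog_div_le_tsum {r d : ℝ} (hr : 0 < r) :
    ENNReal.ofReal (log⁺ (r / d)) ≤
      ENNReal.ofReal (log 2) * ∑' k : ℕ, if d < r / 2 ^ k then 1 else 0 := by
  rcases le_or_gt d 0 with hd | hd
  · have hall : ∀ k : ℕ, d < r / 2 ^ k := fun k => hd.trans_lt (by positivity)
    simp only [hall, if_true, ENNReal.tsum_const_eq_top_of_ne_zero one_ne_zero]
    rw [ENNReal.mul_top (by simp [log_pos one_lt_two])]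
    exact le_top
  rcases le_or_gt r d with hrd | hdr
  · rw [(posLog_eq_zero_iff _).2 (by
      rw [abs_div, abs_of_pos hr, abs_of_pos hd]; exact div_le_one_of_le₀ hrd hd.le)]
    simp
  have hex : ∃ n : ℕ, r / 2 ^ n ≤ d := by
    obtain ⟨n, hn⟩ := pow_unbounded_of_one_lt (r / d) one_lt_two
    exact ⟨n, (div_le_iff₀ (by positivity)).2 (by rw [div_lt_iff₀ hd] at hn; linarith)⟩
  set N := Nat.find hex
  have hlog : log⁺ (r / d) ≤ N * log 2 := by
    rw [posLog_eq_log (by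
      rw [abs_div, abs_of_pos hr, abs_of_pos hd]; exact (one_le_div hd).2 hdr.le), ← log_pow]
    exact log_le_log (by positivity) <| (div_le_iff₀ hd).2 <| by
      have := Nat.find_spec hex
      rwa [div_le_iff₀ (by positivity), mul_comm] at this
  have hcount : (N : ℝ≥0∞) ≤ ∑' k : ℕ, if d < r / 2 ^ k then 1 else 0 := by
    calc (N : ℝ≥0∞) = ∑ k ∈ Finset.range N, if d < r / 2 ^ k then 1 else 0 := by
          rw [Finset.sum_congr rfl fun k hk => if_pos (not_le.1 (Nat.find_min hex
            (Finset.mem_range.1 hk))), Finset.sum_const, Finset.card_range, nsmul_eq_mul, mul_one]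
      _ ≤ _ := ENNReal.sum_le_tsum _
  calc ENNReal.ofReal (log⁺ (r / d)) ≤ ENNReal.ofReal (N * log 2) :=
        ENNReal.ofReal_le_ofReal hlog
    _ = ENNReal.ofReal (log 2) * N := by
      rw [mul_comm, ENNReal.ofReal_mul (log_nonneg one_le_two), ENNReal.ofReal_natCast]
    _ ≤ _ := by gcongr

section Metric

variable {X : Type*} [PseudoMetricSpace X]

theorem log_inv_dist_add_indicator_le {x y : X} {r c : ℝ} (hr : 0 < r) (hr1 : r ≤ 1) :
    log (1 / dist x y) + (ball x (r * exp c))ᶜ.indicator (fun _ => c) y ≤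
      log (1 / r) + log⁺ (r / dist x y) := by
  have hlogr : 0 ≤ log (1 / r) := log_nonneg (one_le_one_div hr hr1)
  rcases (dist_nonneg : 0 ≤ dist x y).eq_or_lt with hd | hd
  · have hy : y ∈ ball x (r * exp c) := mem_ball'.2 (hd ▸ by positivity)
    rw [← hd, indicator_of_notMem (notMem_compl_iff.2 hy), div_zero, div_zero, log_zero,
      posLog_zero, add_zero, add_zero]
    exact hlogr
  have hsplit : log (1 / dist x y) = log (1 / r) + log (r / dist x y) := by
    rw [← log_mul (by positivity) (by positivity)]
    field_simp
  by_cases hy : y ∈ ball x (r * exp c)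
  · rw [indicator_of_notMem (notMem_compl_iff.2 hy), hsplit, add_zero]
    exact (add_le_add_iff_left _).2 (le_max_right _ _)
  · rw [indicator_of_mem hy, hsplit]
    have hfar : log (r / dist x y) + c ≤ 0 := by
      have := log_le_log (by positivity) (not_lt.1 (mt mem_ball'.2 hy))
      rw [log_mul hr.ne' (exp_pos c).ne', log_exp] at this
      rw [log_div hr.ne' hd.ne']
      linarith
    linarith [posLog_nonneg (x := r / dist x y)]

variable [MeasurableSpace X] [OpensMeasurableSpace X]

theorem lintegral_ofReal_posLog_div_dist_le_tsum (ν : Measure X) (x : X) {r : ℝ} (hr : 0 < r) :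
    ∫⁻ y, ENNReal.ofReal (log⁺ (r / dist x y)) ∂ν ≤
      ENNReal.ofReal (log 2) * ∑' k : ℕ, ν (ball x (r / 2 ^ k)) := by
  have hind : ∀ (k : ℕ) y, (if dist x y < r / 2 ^ k then (1 : ℝ≥0∞) else 0) =
      (ball x (r / 2 ^ k)).indicator 1 y := fun k y => by
    by_cases h : dist x y < r / 2 ^ k
    · rw [if_pos h, indicator_of_mem (mem_ball'.2 h), Pi.one_apply]
    · rw [if_neg h, indicator_of_notMem (mt mem_ball'.1 h)]
  calc ∫⁻ y, ENNReal.ofReal (log⁺ (r / dist x y)) ∂ν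
      ≤ ∫⁻ y, ENNReal.ofReal (log 2) * ∑' k : ℕ, (ball x (r / 2 ^ k)).indicator 1 y ∂ν :=
        lintegral_mono fun y => by
          simpa only [hind] using ofReal_posLog_div_le_tsum (d := dist x y) hr
    _ = ENNReal.ofReal (log 2) * ∑' k : ℕ, ν (ball x (r / 2 ^ k)) := by
      rw [lintegral_const_mul' _ _ ENNReal.ofReal_ne_top,
        lintegral_tsum fun k => (measurable_one.indicator measurableSet_ball).aemeasurable]
      simp only [lintegral_indicator_one measurableSet_ball]

theorem lintegral_ofReal_posLog_div_dist_le_of_measure_ball_le {ν : Measure X} {x : X}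
    {r K α : ℝ} (hr : 0 < r) (hK : 0 ≤ K) (hα : 0 < α)
    (hν : ∀ s > 0, ν (ball x s) ≤ ENNReal.ofReal (K * (s / r) ^ α)) :
    ∫⁻ y, ENNReal.ofReal (log⁺ (r / dist x y)) ∂ν ≤
      ENNReal.ofReal (log 2 * K / (1 - (2 ^ α)⁻¹)) := by
  set q : ℝ := (2 ^ α)⁻¹
  have hq0 : 0 ≤ q := by positivity
  have hq1 : q < 1 := inv_lt_one_of_one_lt₀ (one_lt_rpow one_lt_two hα)
  have hball : ∀ k : ℕ, ν (ball x (r / 2 ^ k)) ≤ ENNReal.ofReal (K * q ^ k) := fun k => by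
    refine (hν _ (by positivity)).trans_eq ?_
    rw [div_div_cancel_left' hr.ne', inv_rpow (by positivity), ← rpow_pow_comm zero_le_two,
      inv_pow]
  calc ∫⁻ y, ENNReal.ofReal (log⁺ (r / dist x y)) ∂ν
      ≤ ENNReal.ofReal (log 2) * ∑' k : ℕ, ν (ball x (r / 2 ^ k)) :=
        lintegral_ofReal_posLog_div_dist_le_tsum ν x hr
    _ ≤ ENNReal.ofReal (log 2) * ∑' k : ℕ, ENNReal.ofReal (K * q ^ k) := by
        gcongr with k
        exact hball k
    _ = ENNReal.ofReal (log 2 * K / (1 - q)) := by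
      rw [← ENNReal.ofReal_tsum_of_nonneg (fun k => by positivity)
          ((summable_geometric_of_lt_one hq0 hq1).mul_left K),
        tsum_mul_left, tsum_geometric_of_lt_one hq0 hq1,
        ← ENNReal.ofReal_mul (log_nonneg one_le_two), mul_div_assoc, div_eq_mul_inv]

theorem ae_restrict_dist_le_diam (μ : Measure X) {s : Set X} (hs : Bornology.IsBounded s) {x : X}
    (hx : x ∈ s) : ∀ᵐ y ∂μ.restrict s, dist x y ≤ diam s := by
  filter_upwards [ae_restrict_of_ae_restrict_of_subset subset_closure
    (ae_restrict_mem isClosed_closure.measurableSet)] with y hy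
  rw [← diam_closure]
  exact dist_le_diam_of_mem hs.closure (subset_closure hx) hy

theorem integral_log_inv_dist_add_mul_measureReal_compl_ball_le (ν : Measure X)
    [IsProbabilityMeasure ν] (x : X) {r : ℝ} (c : ℝ) (hr : 0 < r) (hr1 : r ≤ 1)
    (hL : Integrable (fun y => log (1 / dist x y)) ν)
    (hP : Integrable (fun y => log⁺ (r / dist x y)) ν) :
    ∫ y, log (1 / dist x y) ∂ν + c * ν.real (ball x (r * exp c))ᶜ ≤
      log (1 / r) + ∫ y, log⁺ (r / dist x y) ∂ν := by
  have hfar : MeasurableSet (ball x (r * exp c))ᶜ := measurableSet_ball.compl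
  have hind : Integrable ((ball x (r * exp c))ᶜ.indicator fun _ => c) ν :=
    (integrable_const c).indicator hfar
  calc ∫ y, log (1 / dist x y) ∂ν + c * ν.real (ball x (r * exp c))ᶜ
      = ∫ y, (log (1 / dist x y) + (ball x (r * exp c))ᶜ.indicator (fun _ => c) y) ∂ν := by
        rw [integral_add hL hind, integral_indicator_const _ hfar, smul_eq_mul, mul_comm]
    _ ≤ ∫ y, (log (1 / r) + log⁺ (r / dist x y)) ∂ν :=
        integral_mono (hL.add hind) ((integrable_const _).add hP) fun y =>
          log_inv_dist_add_indicator_le hr hr1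
    _ = log (1 / r) + ∫ y, log⁺ (r / dist x y) ∂ν := by
        rw [integral_add (integrable_const _) hP, integral_const, probReal_univ, one_smul]

theorem integrable_log_inv_dist (ν : Measure X) [IsFiniteMeasure ν] (x : X) {r R : ℝ}
    (hr : 0 < r) (hR : ∀ᵐ y ∂ν, dist x y ≤ R)
    (hP : Integrable (fun y => log⁺ (r / dist x y)) ν) :
    Integrable (fun y => log (1 / dist x y)) ν := by
  have hm : Measurable fun y => dist x y := (continuous_const.dist continuous_id).measurable
  refine (hP.add (integrable_const (log⁺ r⁻¹ + log⁺ R))).mono'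
    (measurable_log.comp (hm.const_div 1)).aestronglyMeasurable ?_
  filter_upwards [hR] with y hy
  have hinv : log⁺ (dist x y)⁻¹ ≤ log⁺ (r / dist x y) + log⁺ r⁻¹ := by
    rw [← one_div, ← mul_inv_cancel₀ hr.ne', ← div_mul_eq_mul_div]
    exact posLog_mul
  have hle : log⁺ (dist x y) ≤ log⁺ R := posLog_le_posLog dist_nonneg hy
  have hsplit := posLog_sub_posLog_inv (x := dist x y)
  rw [Pi.add_apply, Real.norm_eq_abs, one_div, log_inv, abs_neg, abs_le]
  constructor <;> linarith [posLog_nonneg (x := dist x y), posLog_nonneg (x := (dist x y)⁻¹)]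

theorem half_lt_measureReal_ball_of_le_integral_log_inv_dist (ν : Measure X)
    [IsProbabilityMeasure ν] (x : X) {ε A C B : ℝ} (hε0 : 0 < ε) (hε1 : ε ≤ 1) (hA : 0 ≤ A)
    (hC : 0 ≤ C) (hB : 0 ≤ B) {R : ℝ} (hR : ∀ᵐ y ∂ν, dist x y ≤ R)
    (hP : ∫⁻ y, ENNReal.ofReal (log⁺ (ε / dist x y)) ∂ν ≤ ENNReal.ofReal B)
    (hpot : (1 - A) * log (1 / ε) ≤ ∫ y, log (1 / dist x y) ∂ν + C) :
    1 / 2 < ν.real (ball x (exp (2 * (C + B) + 1) * ε ^ (1 - 2 * A))) := by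
  have hPm : AEStronglyMeasurable (fun y => log⁺ (ε / dist x y)) ν :=
    (continuous_posLog.measurable.comp
      ((continuous_const.dist continuous_id).measurable.const_div ε)).aestronglyMeasurable
  obtain ⟨hPint, hPB⟩ := integrable_and_integral_le_of_lintegral_ofReal_le hPm
    (ae_of_all _ fun _ => posLog_nonneg) hB hP
  have hL := integrable_log_inv_dist ν x hε0 hR hPint
  have hlog : log (1 / ε) = -log ε := by rw [one_div, log_inv]
  have hlog0 : 0 ≤ log (1 / ε) := log_nonneg (one_le_one_div hε0 hε1)
  -- chosen so that the far mass `m` satisfies `c * m ≤ (c - 1) / 2`, forcing `m < 1 / 2`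
  set c := 2 * (A * log (1 / ε) + C + B) + 1
  have hc : 0 < c := by positivity
  have hρ : exp (2 * (C + B) + 1) * ε ^ (1 - 2 * A) = ε * exp c := by
    rw [rpow_def_of_pos hε0, ← exp_add]
    conv_rhs => rw [← exp_log hε0, ← exp_add]
    congr 1
    simp only [c, hlog]
    ring
  have hfar : c * ν.real (ball x (ε * exp c))ᶜ ≤ (c - 1) / 2 := by
    have := integral_log_inv_dist_add_mul_measureReal_compl_ball_le ν x c hε0 hε1 hL hPint
    linarith
  have hfar_lt : ν.real (ball x (ε * exp c))ᶜ < 1 / 2 := by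
    by_contra! h
    nlinarith
  rw [hρ, ← sub_lt_sub_iff_left 1, ← probReal_compl_eq_one_sub measurableSet_ball]
  linarith

theorem diam_le_of_half_lt_measureReal_ball (ν : Measure X) [IsProbabilityMeasure ν]
    {Ω : Set X} {ρ : ℝ} (hρ : 0 ≤ ρ) (h : ∀ x ∈ Ω, 1 / 2 < ν.real (ball x ρ)) :
    diam Ω ≤ 2 * ρ := by
  refine diam_le_of_forall_dist_le (by positivity) fun x hx y hy => ?_
  by_contra! hxy
  have hunion := measureReal_union (μ := ν)
    (ball_disjoint_ball (x := x) (y := y) (δ := ρ) (ε := ρ) (by linarith)) measurableSet_ball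
  linarith [h x hx, h y hy, measureReal_le_one (μ := ν) (s := ball x ρ ∪ ball y ρ)]

end Metric

theorem withDensity_ofReal_ball_le {D : Set (EuclideanSpace ℝ (Fin 2))}
    {Γ : EuclideanSpace ℝ (Fin 2) → ℝ} (hΓ : AEStronglyMeasurable Γ (volume.restrict D))
    {p : ℝ≥0∞} (hp : 1 ≤ p) {C ε : ℝ} (hε : 0 < ε)
    (hΓp : eLpNorm Γ p (volume.restrict D) ≤
      ENNReal.ofReal (C * ε ^ (-(2 * (1 - 1 / p.toReal)))))
    (x : EuclideanSpace ℝ (Fin 2)) {s : ℝ} (hs : 0 ≤ s) :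
    (volume.restrict D).withDensity (fun y => ENNReal.ofReal (Γ y)) (ball x s) ≤
      ENNReal.ofReal (C * π ^ (1 - 1 / p.toReal) * (s / ε) ^ (2 * (1 - 1 / p.toReal))) := by
  set τ := 1 - 1 / p.toReal
  have hτ : 0 ≤ τ := sub_nonneg.2 (one_div_toReal_le_one hp)
  calc (volume.restrict D).withDensity (fun y => ENNReal.ofReal (Γ y)) (ball x s)
      ≤ eLpNorm Γ p (volume.restrict D) * volume.restrict D (ball x s) ^ τ := by
        rw [withDensity_apply _ measurableSet_ball]
        exact setLIntegral_ofReal_le_eLpNorm_mul_measure_rpow hΓ hp _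
    _ ≤ ENNReal.ofReal (C * ε ^ (-(2 * τ))) * volume (ball x s) ^ τ := by
        gcongr
        exact Measure.restrict_le_self
    _ = ENNReal.ofReal (C * π ^ τ * (s / ε) ^ (2 * τ)) := by
        rw [EuclideanSpace.volume_ball_fin_two, ← ENNReal.ofReal_pow hs,
          ← ENNReal.ofReal_mul (by positivity), ENNReal.ofReal_rpow_of_nonneg (by positivity) hτ,
          ← ENNReal.ofReal_mul' (by positivity),
          mul_rpow (by positivity) pi_pos.le, div_rpow hs hε.le, rpow_neg hε.le,
          ← rpow_natCast, ← rpow_mul hs]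
        ring_nf

theorem stmt10_general (D : Set (EuclideanSpace ℝ (Fin 2)))
    (hD_bdd : Bornology.IsBounded D)
    (p : ENNReal) (hp : 1 < p) (C₁ C₂ : ℝ) (hC₁ : 0 < C₁) (hC₂ : 0 < C₂) :
    ∃ R > (1 : ℝ), ∀ ε ∈ Ioo (0 : ℝ) 1, ∀ A ≥ (0 : ℝ),
      ∀ Γ : EuclideanSpace ℝ (Fin 2) → ℝ, Measurable Γ →
      (∀ᵐ x ∂(volume.restrict D), 0 ≤ Γ x) →
      (∫ x in D, Γ x = 1) →
      eLpNorm Γ p (volume.restrict D)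
        ≤ ENNReal.ofReal (C₁ * ε ^ (-(2 * (1 - 1 / p.toReal)))) →
      ∀ Ω ⊆ D, (∀ x ∈ Ω,
        (1 - A) * Real.log (1 / ε)
          ≤ (∫ y in D, Real.log (1 / dist x y) * Γ y) + C₂) →
      Metric.diam Ω ≤ R * ε ^ ((1 : ℝ) - 2 * A) := by
  set τ := 1 - 1 / p.toReal
  have hτ : 0 < τ := sub_pos.2 (one_div_toReal_lt_one hp)
  set C₃ := log 2 * (C₁ * π ^ τ) / (1 - (2 ^ (2 * τ))⁻¹)
  have hC₃ : 0 ≤ C₃ := div_nonneg (by positivity)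
    (sub_nonneg.2 (inv_le_one_of_one_le₀ (one_le_rpow one_le_two (by positivity))))
  refine ⟨2 * exp (2 * (C₂ + C₃) + 1),
    by linarith [one_lt_exp_iff.2 (by positivity : 0 < 2 * (C₂ + C₃) + 1)], ?_⟩
  rintro ε ⟨hε0, hε1⟩ A hA Γ hΓm hΓ0 hΓ1 hΓp Ω hΩD hpot
  set ν := (volume.restrict D).withDensity fun y => ENNReal.ofReal (Γ y)
  have := isProbabilityMeasure_withDensity_ofReal hΓ0 hΓ1
  have hlog (x) : ∫⁻ y, ENNReal.ofReal (log⁺ (ε / dist x y)) ∂ν ≤ ENNReal.ofReal C₃ :=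
    lintegral_ofReal_posLog_div_dist_le_of_measure_ball_le hε0 (by positivity) (by positivity)
      fun s hs => withDensity_ofReal_ball_le hΓm.aestronglyMeasurable hp.le hε0 hΓp x hs.le
  rw [mul_assoc]
  refine diam_le_of_half_lt_measureReal_ball ν (by positivity) fun x hx => ?_
  refine half_lt_measureReal_ball_of_le_integral_log_inv_dist ν x hε0 hε1.le hA hC₂.le hC₃
    ((withDensity_absolutelyContinuous _ _).ae_le (ae_restrict_dist_le_diam _ hD_bdd (hΩD hx)))
    (hlog x) ?_
  rw [integral_withDensity_ofReal hΓm hΓ0]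
  exact hpot x hx

/-- Concentration lemma: if `Γ ≥ 0`, `∫_D Γ = 1`, `‖Γ‖_{L^p(D)} ≤ C₁ ε^{-2(1-1/p)}`
and `(1-A) ln(1/ε) ≤ ∫_D ln(1/|x-y|) Γ(y) dy + C₂` for every `x ∈ Ω`, then
`diam Ω ≤ R ε^{1-2A}` for some `R > 1` depending only on `C₁, C₂, p, D` but not
on `A` or `ε`. -/
theorem stmt10 (D : Set (EuclideanSpace ℝ (Fin 2)))
    (hD_meas : MeasurableSet D) (hD_bdd : Bornology.IsBounded D)
    (p : ENNReal) (hp : 1 < p) (C₁ C₂ : ℝ) (hC₁ : 0 < C₁) (hC₂ : 0 < C₂) :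
    ∃ R > (1 : ℝ), ∀ ε ∈ Ioo (0 : ℝ) 1, ∀ A ≥ (0 : ℝ),
      ∀ Γ : EuclideanSpace ℝ (Fin 2) → ℝ, Measurable Γ →
      (∀ᵐ x ∂(volume.restrict D), 0 ≤ Γ x) →
      (∫ x in D, Γ x = 1) →
      eLpNorm Γ p (volume.restrict D)
        ≤ ENNReal.ofReal (C₁ * ε ^ (-(2 * (1 - 1 / p.toReal)))) →
      ∀ Ω ⊆ D, (∀ x ∈ Ω,
        (1 - A) * Real.log (1 / ε)
          ≤ (∫ y in D, Real.log (1 / dist x y) * Γ y) + C₂) →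
      Metric.diam Ω ≤ R * ε ^ ((1 : ℝ) - 2 * A) :=
  stmt10_general D hD_bdd p hp C₁ C₂ hC₁ hC₂
end

section
/- Let ψ = 𝒢ω − μ where ω ∈ L^∞(D), 0 ≤ ω ≤ Λ/ε², ∫_D ω = κ, and suppose μ ≥ (κ/2π)ln(1/ε) − C₀. Then for every x ∈ D, ψ(x) ≤ (κ/4π)ln Λ + C for a constant C depending only on C₀, κ, D but not on ε and Λ. -/
/-!
Split `𝒢ω` into its logarithmic part and the part coming from `h`, which contributes at most
`Mκ` because `h ≥ -M` and `ω ≥ 0`. For the logarithmic part, the bathtub principle shows that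
among densities `0 ≤ ω ≤ A = Λ/ε²` of mass `κ`, the integral `∫ -log|x - y| ω(y) dy` is largest
for `A` times the indicator of the disc around `x` of area `κ/A`, where it equals
`(κ/2)(1 + log(πA/κ))`. Since `log A = log Λ + 2 log(1/ε)`, after dividing by `2π` the term
`(κ/2π) log(1/ε)` cancels against the lower bound on `μ`, leaving `(κ/4π) log Λ` plus a constant.
-/

open Set Filter MeasureTheory Real Metric

theorem integral_self_mul_log {r : ℝ} (hr : 0 ≤ r) :
    ∫ t in (0 : ℝ)..r, t * log t = r ^ 2 * log r / 2 - r ^ 2 / 4 := by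
  have hcont : ContinuousOn (fun t : ℝ ↦ t * (t * log t) / 2 - t ^ 2 / 4) (Icc 0 r) := by
    fun_prop
  rw [intervalIntegral.integral_eq_sub_of_hasDerivAt_of_le hr hcont]
  · simp only [zero_mul, zero_div, ne_eq, OfNat.ofNat_ne_zero, not_false_eq_true, zero_pow,
      sub_zero]
    ring
  · intro t ht
    refine ((((hasDerivAt_id' t).mul ((hasDerivAt_id' t).mul (hasDerivAt_log ht.1.ne'))).div_const
      2).sub ((hasDerivAt_pow 2 t).div_const 4)).congr_deriv ?_
    simp only [Pi.mul_apply]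
    field_simp [ht.1.ne']
    ring
  · exact continuous_mul_log.intervalIntegrable 0 r

theorem preimage_sub_right_ball_zero {E : Type*} [SeminormedAddCommGroup E] (x : E) (r : ℝ) :
    (· - x) ⁻¹' ball (0 : E) r = ball x r := by
  ext y; simp [dist_eq_norm]

section Radial

variable {E F : Type*} [NormedAddCommGroup E] [NormedSpace ℝ E] [FiniteDimensional ℝ E]
  [MeasurableSpace E] [BorelSpace E] [Nontrivial E] (μ : Measure E) [μ.IsAddHaarMeasure]
  [NormedAddCommGroup F] [NormedSpace ℝ F]

theorem setIntegral_ball_fun_norm_addHaar (f : ℝ → F) (r : ℝ) :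
    ∫ y in ball (0 : E) r, f ‖y‖ ∂μ = Module.finrank ℝ E • μ.real (ball 0 1) •
      ∫ t in Ioo 0 r, t ^ (Module.finrank ℝ E - 1) • f t := by
  have hball : ∀ y : E, (ball (0 : E) r).indicator (fun y ↦ f ‖y‖) y = (Iio r).indicator f ‖y‖ :=
    fun y ↦ by by_cases hy : ‖y‖ < r <;> simp [indicator, hy]
  have hIoi : ∀ t : ℝ, t ^ (Module.finrank ℝ E - 1) • (Iio r).indicator f t =
      (Iio r).indicator (fun t ↦ t ^ (Module.finrank ℝ E - 1) • f t) t :=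
    fun t ↦ by by_cases ht : t < r <;> simp [indicator, ht]
  rw [← integral_indicator measurableSet_ball, funext hball, integral_fun_norm_addHaar,
    funext hIoi, setIntegral_indicator measurableSet_Iio, Ioi_inter_Iio]

theorem integrableOn_log_norm_ball (r : ℝ) : IntegrableOn (fun y : E ↦ log ‖y‖) (ball 0 r) μ := by
  rw [integrableOn_fun_norm_addHaar]
  rcases le_or_gt r 0 with hr | hr
  · simp [Ioo_eq_empty_of_le hr]
  have hlog : IntegrableOn log (Icc 0 r) := by
    rw [integrableOn_Icc_iff_integrableOn_Ioo,
      ← intervalIntegrable_iff_integrableOn_Ioo_of_le hr.le]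
    exact intervalIntegral.intervalIntegrable_log'
  exact ((hlog.continuousOn_mul (continuous_pow _).continuousOn isCompact_Icc).mono_set
    Ioo_subset_Icc_self)

theorem integrableOn_log_dist_ball (x : E) (r : ℝ) :
    IntegrableOn (fun y ↦ log (dist x y)) (ball x r) μ := by
  have h := ((measurePreserving_sub_right μ x).integrableOn_comp_preimage
    (measurableEmbedding_subRight x)).mpr (integrableOn_log_norm_ball μ r)
  rw [preimage_sub_right_ball_zero] at h
  exact h.congr_fun (fun y _ ↦ by simp [dist_eq_norm']) measurableSet_ball

theorem Bornology.IsBounded.integrableOn_log_dist {s : Set E} (hs : Bornology.IsBounded s)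
    (x : E) : IntegrableOn (fun y ↦ log (dist x y)) s μ :=
  let ⟨_, hR⟩ := hs.subset_ball x
  (integrableOn_log_dist_ball μ x _).mono_set hR

theorem setIntegral_ball_fun_dist_addHaar (f : ℝ → F) (x : E) (r : ℝ) :
    ∫ y in ball x r, f (dist x y) ∂μ = Module.finrank ℝ E • μ.real (ball 0 1) •
      ∫ t in Ioo 0 r, t ^ (Module.finrank ℝ E - 1) • f t := by
  rw [← setIntegral_ball_fun_norm_addHaar,
    ← (measurePreserving_sub_right μ x).setIntegral_preimage_emb (measurableEmbedding_subRight x)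
      (fun y ↦ f ‖y‖), preimage_sub_right_ball_zero]
  simp [dist_eq_norm']

end Radial

theorem setIntegral_ball_log_dist_fin_two (x : EuclideanSpace ℝ (Fin 2)) {r : ℝ} (hr : 0 ≤ r) :
    ∫ y in ball x r, log (dist x y) = π * r ^ 2 * (log r - 1 / 2) := by
  rw [setIntegral_ball_fun_dist_addHaar, finrank_euclideanSpace_fin, measureReal_def,
    EuclideanSpace.volume_ball_fin_two, integral_Ioc_eq_integral_Ioo.symm,
    ← intervalIntegral.integral_of_le hr]
  simp only [ENNReal.ofReal_one, one_pow, one_mul, ENNReal.toReal_ofReal pi_nonneg, pow_one,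
    smul_eq_mul, integral_self_mul_log hr, nsmul_eq_mul, Nat.cast_ofNat, Nat.add_one_sub_one]
  ring

section Bathtub

variable {α : Type*} [MeasurableSpace α] {μ : Measure α} {f ω : α → ℝ} {D B : Set α} {A : ℝ}

theorem setIntegral_mul_le_of_nonneg_on (hD : MeasurableSet D) (hB : MeasurableSet B)
    (hA : 0 ≤ A) (hf_nonneg : ∀ᵐ y ∂μ.restrict B, 0 ≤ f y) (hf_nonpos : ∀ y ∉ B, f y ≤ 0)
    (hω : ∀ᵐ y ∂μ.restrict D, 0 ≤ ω y ∧ ω y ≤ A)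
    (hfω : IntegrableOn (fun y ↦ f y * ω y) D μ) (hfB : IntegrableOn f B μ) :
    ∫ y in D, f y * ω y ∂μ ≤ A * ∫ y in B, f y ∂μ := by
  have hω_inter := ae_restrict_of_ae_restrict_of_subset (inter_subset_left (t := B)) hω
  have hf_inter := ae_restrict_of_ae_restrict_of_subset (inter_subset_right (s := D)) hf_nonneg
  have hω_diff := ae_restrict_of_ae_restrict_of_subset (sdiff_subset (t := B)) hω
  have hout : ∫ y in D \ B, f y * ω y ∂μ ≤ 0 := by
    refine setIntegral_nonpos_of_ae_restrict ?_
    filter_upwards [hω_diff, ae_restrict_mem (hD.diff hB)] with y hωy hy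
    exact mul_nonpos_of_nonpos_of_nonneg (hf_nonpos y hy.2) hωy.1
  calc ∫ y in D, f y * ω y ∂μ
      = ∫ y in D ∩ B, f y * ω y ∂μ + ∫ y in D \ B, f y * ω y ∂μ :=
        (integral_inter_add_sdiff hB hfω).symm
    _ ≤ ∫ y in D ∩ B, A * f y ∂μ := by
        grw [hout, add_zero]
        refine integral_mono_ae (hfω.mono_set inter_subset_left)
          ((hfB.mono_set inter_subset_right).const_mul A) ?_
        filter_upwards [hω_inter, hf_inter] with y hωy hfy
        nlinarith [hωy.2]
    _ ≤ ∫ y in B, A * f y ∂μ := by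
        refine setIntegral_mono_set (hfB.const_mul A) ?_ inter_subset_right.eventuallyLE
        filter_upwards [hf_nonneg] with y hfy
        exact mul_nonneg hA hfy
    _ = A * ∫ y in B, f y ∂μ := integral_const_mul A _

theorem setIntegral_mul_le_bathtub (hD : MeasurableSet D) (hB : MeasurableSet B)
    (hB_fin : μ B ≠ ⊤) (hA : 0 ≤ A) {L : ℝ} (hf_ge : ∀ᵐ y ∂μ.restrict B, L ≤ f y)
    (hf_le : ∀ y ∉ B, f y ≤ L) (hω : ∀ᵐ y ∂μ.restrict D, 0 ≤ ω y ∧ ω y ≤ A)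
    (hωD : IntegrableOn ω D μ) (hfω : IntegrableOn (fun y ↦ f y * ω y) D μ)
    (hfB : IntegrableOn f B μ) (hmass : ∫ y in D, ω y ∂μ = A * μ.real B) :
    ∫ y in D, f y * ω y ∂μ ≤ A * ∫ y in B, f y ∂μ := by
  have hshift := setIntegral_mul_le_of_nonneg_on (f := fun y ↦ f y - L) hD hB hA
    (by filter_upwards [hf_ge] with y hy using sub_nonneg.mpr hy)
    (fun y hy ↦ sub_nonpos.mpr (hf_le y hy)) hω
    ((hfω.sub (hωD.const_mul L)).congr_fun (fun y _ ↦ by simp only [Pi.sub_apply]; ring) hD)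
    (hfB.sub (integrableOn_const hB_fin))
  have hD_shift : ∫ y in D, (f y - L) * ω y ∂μ =
      ∫ y in D, f y * ω y ∂μ - L * ∫ y in D, ω y ∂μ := by
    rw [← integral_const_mul, ← integral_sub hfω (hωD.const_mul L)]
    exact integral_congr_ae (ae_of_all _ fun y ↦ by ring)
  have hB_shift : ∫ y in B, (f y - L) ∂μ = ∫ y in B, f y ∂μ - L * μ.real B := by
    rw [integral_sub hfB (integrableOn_const hB_fin), setIntegral_const, smul_eq_mul, mul_comm]
  rw [hD_shift, hB_shift, hmass] at hshift
  linear_combination hshift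

end Bathtub

theorem setIntegral_neg_log_dist_mul_le {D : Set (EuclideanSpace ℝ (Fin 2))}
    (hD : MeasurableSet D) (hD_bdd : Bornology.IsBounded D) (x : EuclideanSpace ℝ (Fin 2))
    {ω : EuclideanSpace ℝ (Fin 2) → ℝ} {A κ : ℝ} (hA : 0 < A) (hκ : 0 < κ)
    (hω_meas : AEStronglyMeasurable ω (volume.restrict D))
    (hω : ∀ᵐ y ∂volume.restrict D, 0 ≤ ω y ∧ ω y ≤ A) (hmass : ∫ y in D, ω y = κ) :
    ∫ y in D, -log (dist x y) * ω y ≤ κ / 2 * (1 + log (π * A / κ)) := by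
  set r := √(κ / (π * A))
  have hr : 0 < r := sqrt_pos.mpr (by positivity)
  have hr_sq : A * (π * r ^ 2) = κ := by
    rw [sq_sqrt (by positivity)]; field_simp
  have hlog_r : log r = -log (π * A / κ) / 2 := by
    rw [log_sqrt (by positivity), ← log_inv, inv_div]
  have hω_bdd : ∀ᵐ y ∂volume.restrict D, ‖ω y‖ ≤ A := by
    filter_upwards [hω] with y hy
    rw [norm_of_nonneg hy.1]; exact hy.2
  have hne : ∀ᵐ y ∂volume.restrict (ball x r), y ≠ x :=
    ae_restrict_of_ae (compl_mem_ae_iff.mpr (measure_singleton x))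
  calc ∫ y in D, -log (dist x y) * ω y
      ≤ A * ∫ y in ball x r, -log (dist x y) := by
        refine setIntegral_mul_le_bathtub hD measurableSet_ball
          (measure_ball_lt_top (μ := volume)).ne hA.le (L := -log r) ?_ ?_ hω ?_ ?_
          (integrableOn_log_dist_ball volume x r).neg ?_
        · filter_upwards [hne, ae_restrict_mem measurableSet_ball] with y hyx hy
          exact neg_le_neg (log_le_log (dist_pos.mpr hyx.symm) (mem_ball'.mp hy).le)
        · intro y hy
          exact neg_le_neg (log_le_log hr (not_lt.mp (mt mem_ball'.mpr hy)))
        · have := isFiniteMeasure_restrict.mpr (hD_bdd.measure_lt_top (μ := volume)).ne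
          exact Integrable.of_bound hω_meas A hω_bdd
        · exact (hD_bdd.integrableOn_log_dist volume x).neg.mul_bdd hω_meas hω_bdd
        · rw [hmass, measureReal_def, EuclideanSpace.volume_ball_fin_two,
            ENNReal.toReal_mul, ENNReal.toReal_pow, ENNReal.toReal_ofReal hr.le,
            ENNReal.toReal_ofReal pi_nonneg, mul_comm _ π, hr_sq]
    _ = κ / 2 * (1 + log (π * A / κ)) := by
        rw [integral_neg, setIntegral_ball_log_dist_fin_two x hr.le, hlog_r]
        linear_combination (1 / 2 + log (π * A / κ) / 2) * hr_sq

theorem setIntegral_mul_le_of_le_neg_log_dist {D : Set (EuclideanSpace ℝ (Fin 2))}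
    (hD : MeasurableSet D) (hD_bdd : Bornology.IsBounded D) {x : EuclideanSpace ℝ (Fin 2)}
    {g ω : EuclideanSpace ℝ (Fin 2) → ℝ} {c M A κ : ℝ} (hc : 0 ≤ c)
    (hg : ∀ y ∈ D, g y ≤ c * -log (dist x y) + M) (hA : 0 < A) (hκ : 0 < κ)
    (hω_meas : AEStronglyMeasurable ω (volume.restrict D))
    (hω : ∀ᵐ y ∂volume.restrict D, 0 ≤ ω y ∧ ω y ≤ A) (hmass : ∫ y in D, ω y = κ)
    (hgω : IntegrableOn (fun y ↦ g y * ω y) D) :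
    ∫ y in D, g y * ω y ≤ c * (κ / 2 * (1 + log (π * A / κ))) + M * κ := by
  have hω_bdd : ∀ᵐ y ∂volume.restrict D, ‖ω y‖ ≤ A := by
    filter_upwards [hω] with y hy
    rw [norm_of_nonneg hy.1]; exact hy.2
  have := isFiniteMeasure_restrict.mpr (hD_bdd.measure_lt_top (μ := volume)).ne
  have hωD : IntegrableOn ω D := Integrable.of_bound hω_meas A hω_bdd
  have hlogω : IntegrableOn (fun y ↦ -log (dist x y) * ω y) D :=
    (hD_bdd.integrableOn_log_dist volume x).neg.mul_bdd hω_meas hω_bdd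
  calc ∫ y in D, g y * ω y
      ≤ ∫ y in D, (c * (-log (dist x y) * ω y) + M * ω y) := by
        refine integral_mono_ae hgω ((hlogω.const_mul c).add (hωD.const_mul M)) ?_
        filter_upwards [hω, ae_restrict_mem hD] with y hωy hy
        nlinarith [hg y hy, hωy.1]
    _ = c * (∫ y in D, -log (dist x y) * ω y) + M * κ := by
        rw [integral_add (hlogω.const_mul c) (hωD.const_mul M), integral_const_mul,
          integral_const_mul, hmass]
    _ ≤ c * (κ / 2 * (1 + log (π * A / κ))) + M * κ := by
        gcongr
        exact setIntegral_neg_log_dist_mul_le hD hD_bdd x hA hκ hω_meas hω hmass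

/-- A priori upper bound for the stream function: if `ψ = 𝒢ω - μ` with
`0 ≤ ω ≤ Λ/ε²`, `∫_D ω = κ` and `μ ≥ (κ/2π) ln(1/ε) - C₀`, then
`ψ(x) ≤ (κ/4π) ln Λ + C` on `D`, with `C` independent of `ε` and `Λ`. -/
theorem stmt12 (D : Set (EuclideanSpace ℝ (Fin 2)))
    (hD_meas : MeasurableSet D) (hD_bdd : Bornology.IsBounded D)
    (G h : EuclideanSpace ℝ (Fin 2) → EuclideanSpace ℝ (Fin 2) → ℝ)
    (hG : ∀ x ∈ D, ∀ y ∈ D,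
      G x y = -(2 * π)⁻¹ * Real.log (dist x y) - h x y)
    (M : ℝ) (hh_bd : ∀ x ∈ D, ∀ y ∈ D, -M ≤ h x y)
    (κ C₀ : ℝ) (hκ : 0 < κ) (hC₀ : 0 < C₀) :
    ∃ C > (0 : ℝ), ∀ ε ∈ Ioo (0 : ℝ) 1, ∀ Λ > (1 : ℝ), ∀ μ : ℝ,
      ∀ ω : EuclideanSpace ℝ (Fin 2) → ℝ, Measurable ω →
      (∀ᵐ x ∂(volume.restrict D), 0 ≤ ω x ∧ ω x ≤ Λ / ε ^ 2) →
      (∫ x in D, ω x = κ) →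
      (κ / (2 * π) * Real.log (1 / ε) - C₀ ≤ μ) →
      ∀ x ∈ D, (∫ y in D, G x y * ω y) - μ ≤ κ / (4 * π) * Real.log Λ + C := by
  set K := M * κ + κ / (4 * π) * (1 + log (π / κ))
  refine ⟨C₀ + max 0 K, by positivity, ?_⟩
  rintro ε ⟨hε0, hε1⟩ Λ hΛ μ ω hω_meas hω hmass hμ x hx
  have hlog_ε : 0 ≤ log (1 / ε) := log_nonneg (one_le_one_div hε0 hε1.le)
  have hlog_Λ : 0 ≤ log Λ := log_nonneg hΛ.le
  by_cases hGω : IntegrableOn (fun y ↦ G x y * ω y) D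
  · have hG_le : ∀ y ∈ D, G x y ≤ (2 * π)⁻¹ * -log (dist x y) + M := fun y hy ↦ by
      rw [hG x hx y hy]; linarith [hh_bd x hx y hy]
    have hbound := setIntegral_mul_le_of_le_neg_log_dist hD_meas hD_bdd (by positivity) hG_le
      (by positivity) hκ hω_meas.aestronglyMeasurable hω hmass hGω
    have hlog : log (π * (Λ / ε ^ 2) / κ) = log (π / κ) + log Λ + 2 * log (1 / ε) := by
      rw [show π * (Λ / ε ^ 2) / κ = π / κ * Λ * (1 / ε) ^ 2 by field_simp,
        log_mul (by positivity) (by positivity), log_mul (by positivity) (by positivity), log_pow]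
      push_cast
      ring
    rw [hlog] at hbound
    linear_combination hbound + hμ + le_max_right 0 K
  · rw [integral_undef hGω]
    have : 0 ≤ κ / (2 * π) * log (1 / ε) + κ / (4 * π) * log Λ := by positivity
    linarith [le_max_left 0 K]
end

section
/- (Elimination of the patch part) Suppose f satisfies (H1)–(H3) with constant δ₁ ∈ (0,1) from (H2)'. Suppose for all ε, Λ the maximizer's stream function satisfies ψ^{ε,Λ} ≤ |1−2δ₁| f⁻¹(Λ) + (κ/4π) ln Λ + C on D, with C independent of ε, Λ, and that ψ^{ε,Λ} ≥ f⁻¹(Λ) a.e. on the patch set {ω^{ε,Λ} = Λ/ε²}. Then there exists Λ₀ (independent of ε) such that for all Λ ≥ Λ₀ and all ε > 0, the patch set {x ∈ D : ω^{ε,Λ}(x) = Λ/ε²} has Lebesgue measure zero. -/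
open Set Filter MeasureTheory Real

/-!
Since `f⁻¹(Λ) → ∞` and `f(s) e^{-τ s} → 0` for every `τ > 0`, putting `s = f⁻¹(Λ)` gives
`ln Λ < τ f⁻¹(Λ) + K` for large `Λ`, for every `τ > 0` and `K`. With `τ = 4π(1 - |1 - 2δ₁|)/κ`
this says that the upper bound `|1 - 2δ₁| f⁻¹(Λ) + (κ/4π) ln Λ + C` for `ψ` is eventually
below `f⁻¹(Λ)`, so the lower bound `ψ ≥ f⁻¹(Λ)` can hold only on a null subset of `D`.
-/

section Inverse

variable {f g : ℝ → ℝ}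

lemma nonneg_of_rightInverse (hf_neg : ∀ s ≤ (0 : ℝ), f s = 0)
    (hg_left : ∀ s ≥ (0 : ℝ), g (f s) = s) (hg_right : ∀ s ≥ (0 : ℝ), f (g s) = s)
    {s : ℝ} (hs : 0 ≤ s) : 0 ≤ g s := by
  by_contra! hgs
  have hs0 : s = 0 := by rw [← hg_right s hs, hf_neg _ hgs.le]
  have hg0 : g 0 = 0 := by simpa [hf_neg 0 le_rfl] using hg_left 0 le_rfl
  rw [hs0, hg0] at hgs
  exact lt_irrefl 0 hgs

lemma tendsto_atTop_of_rightInverse (hf_neg : ∀ s ≤ (0 : ℝ), f s = 0)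
    (hf_mono : StrictMonoOn f (Ici 0))
    (hg_left : ∀ s ≥ (0 : ℝ), g (f s) = s) (hg_right : ∀ s ≥ (0 : ℝ), f (g s) = s) :
    Tendsto g atTop atTop := by
  refine tendsto_atTop.2 fun b => ?_
  set S := max b 0
  have hS : 0 ≤ S := le_max_right b 0
  have hfS : 0 ≤ f S := by
    simpa [hf_neg 0 le_rfl] using hf_mono.monotoneOn self_mem_Ici (mem_Ici.2 hS) hS
  filter_upwards [eventually_ge_atTop (f S)] with Λ hΛ
  have hΛ0 : 0 ≤ Λ := hfS.trans hΛ
  have hgΛ : S ≤ g Λ := by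
    rwa [← hg_right Λ hΛ0, hf_mono.le_iff_le (mem_Ici.2 hS)
      (mem_Ici.2 (nonneg_of_rightInverse hf_neg hg_left hg_right hΛ0))] at hΛ
  exact (le_max_left b 0).trans hgΛ

lemma eventually_log_lt_of_tendsto_mul_exp {τ : ℝ}
    (hdecay : Tendsto (fun s => f s * exp (-τ * s)) atTop (nhds 0))
    (hg : Tendsto g atTop atTop) (hfg : ∀ᶠ Λ in atTop, f (g Λ) = Λ) (K : ℝ) :
    ∀ᶠ Λ in atTop, log Λ < τ * g Λ + K := by
  have hsmall := hg.eventually (hdecay.eventually_lt_const (exp_pos K))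
  filter_upwards [hsmall, hfg, eventually_gt_atTop 0] with Λ hΛ hfgΛ hΛ0
  rw [hfgΛ] at hΛ
  rw [log_lt_iff_lt_exp hΛ0, add_comm, exp_add]
  calc Λ = Λ * exp (-τ * g Λ) * exp (τ * g Λ) := by
          rw [mul_assoc, ← exp_add]; simp
    _ < exp K * exp (τ * g Λ) := by gcongr

lemma eventually_mul_add_mul_log_add_lt
    (hlog : ∀ τ > (0 : ℝ), ∀ K, ∀ᶠ Λ in atTop, log Λ < τ * g Λ + K)
    {a b : ℝ} (ha : a < 1) (hb : 0 < b) (C : ℝ) :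
    ∀ᶠ Λ in atTop, a * g Λ + b * log Λ + C < g Λ := by
  filter_upwards [hlog ((1 - a) / b) (div_pos (sub_pos.2 ha) hb) (-C / b)] with Λ hΛ
  have hbΛ := mul_lt_mul_of_pos_left hΛ hb
  have hsimp : b * ((1 - a) / b * g Λ + -C / b) = (1 - a) * g Λ - C := by
    field_simp; ring
  linarith

end Inverse

lemma measure_sep_eq_zero_of_ae_restrict {α : Type*} [MeasurableSpace α] {μ : Measure α}
    {D : Set α} {P Q : α → Prop} (h : ∀ᵐ x ∂μ.restrict D, P x → Q x)
    (hD : ∀ x ∈ D, P x → ¬ Q x) : μ {x ∈ D | P x} = 0 := by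
  have hsub : {x ∈ D | P x} ⊆ {x | ¬ (P x → Q x)} ∩ D :=
    fun x ⟨hxD, hPx⟩ => ⟨fun hPQ => hD x hxD hPx (hPQ hPx), hxD⟩
  refine measure_mono_null hsub (nonpos_iff_eq_zero.1 ?_)
  exact (Measure.le_restrict_apply D _).trans (ae_iff.1 h).le

theorem stmt13_general (D : Set (EuclideanSpace ℝ (Fin 2)))
    (f g : ℝ → ℝ)
    (hf_neg : ∀ s ≤ (0 : ℝ), f s = 0)
    (hf_mono : StrictMonoOn f (Ici 0))
    (hg_left : ∀ s ≥ (0 : ℝ), g (f s) = s)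
    (hg_right : ∀ s ≥ (0 : ℝ), f (g s) = s)
    (δ₁ : ℝ) (hδ₁ : δ₁ ∈ Ioo (0 : ℝ) 1)
    (hH3 : ∀ τ > (0 : ℝ), Tendsto (fun s => f s * Real.exp (-τ * s)) atTop (nhds 0))
    (κ C : ℝ) (hκ : 0 < κ)
    (ω ψ : ℝ → ℝ → EuclideanSpace ℝ (Fin 2) → ℝ)
    (hψ_up : ∀ ε > (0 : ℝ), ∀ Λ > (1 : ℝ), ∀ x ∈ D,
      ψ ε Λ x ≤ |1 - 2 * δ₁| * g Λ + κ / (4 * π) * Real.log Λ + C)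
    (hpatch : ∀ ε > (0 : ℝ), ∀ Λ > (1 : ℝ),
      ∀ᵐ x ∂(volume.restrict D), ω ε Λ x = Λ / ε ^ 2 → g Λ ≤ ψ ε Λ x) :
    ∃ Λ₀ > (1 : ℝ), ∀ Λ ≥ Λ₀, ∀ ε > (0 : ℝ),
      volume {x ∈ D | ω ε Λ x = Λ / ε ^ 2} = 0 := by
  have hg := tendsto_atTop_of_rightInverse hf_neg hf_mono hg_left hg_right
  have hfg : ∀ᶠ Λ in atTop, f (g Λ) = Λ :=
    (eventually_ge_atTop 0).mono fun Λ hΛ => hg_right Λ hΛ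
  have hcoef : |1 - 2 * δ₁| < 1 := abs_lt.2 ⟨by linarith [hδ₁.2], by linarith [hδ₁.1]⟩
  obtain ⟨Λ₁, hΛ₁⟩ := eventually_atTop.1 <| eventually_mul_add_mul_log_add_lt
    (fun τ hτ => eventually_log_lt_of_tendsto_mul_exp (hH3 τ hτ) hg hfg) hcoef
    (by positivity : 0 < κ / (4 * π)) C
  refine ⟨max Λ₁ 2, by simp, fun Λ hΛ ε hε => ?_⟩
  have hΛ1 : 1 < Λ := by linarith [le_max_right Λ₁ 2]
  refine measure_sep_eq_zero_of_ae_restrict (hpatch ε hε Λ hΛ1) fun x hxD _ hle => ?_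
  have := hΛ₁ Λ (le_of_max_le_left hΛ)
  linarith [hψ_up ε hε Λ hΛ1 x hxD]

/-- Elimination of the patch part: under (H1)–(H3), if the stream functions satisfy
`ψ^{ε,Λ} ≤ |1-2δ₁| f⁻¹(Λ) + (κ/4π) ln Λ + C` on `D` and `ψ^{ε,Λ} ≥ f⁻¹(Λ)` a.e.
on the patch set `{ω^{ε,Λ} = Λ/ε²}`, then for all `Λ` large (independently of `ε`)
the patch set is Lebesgue-null. -/
theorem stmt13 (D : Set (EuclideanSpace ℝ (Fin 2)))
    (hD_meas : MeasurableSet D) (hD_bdd : Bornology.IsBounded D)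
    (f g : ℝ → ℝ)
    (hf_cont : Continuous f) (hf_neg : ∀ s ≤ (0 : ℝ), f s = 0)
    (hf_mono : StrictMonoOn f (Ici 0))
    (hg_neg : ∀ s ≤ (0 : ℝ), g s = 0)
    (hg_left : ∀ s ≥ (0 : ℝ), g (f s) = s)
    (hg_right : ∀ s ≥ (0 : ℝ), f (g s) = s)
    (δ₁ : ℝ) (hδ₁ : δ₁ ∈ Ioo (0 : ℝ) 1)
    (hH2' : ∀ s ≥ (0 : ℝ), (∫ r in (0 : ℝ)..s, g r) ≥ δ₁ * s * g s)
    (hH3 : ∀ τ > (0 : ℝ), Tendsto (fun s => f s * Real.exp (-τ * s)) atTop (nhds 0))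
    (κ C : ℝ) (hκ : 0 < κ) (hC : 0 < C)
    (ω ψ : ℝ → ℝ → EuclideanSpace ℝ (Fin 2) → ℝ)
    (hω_meas : ∀ ε Λ, Measurable (ω ε Λ))
    (hψ_up : ∀ ε > (0 : ℝ), ∀ Λ > (1 : ℝ), ∀ x ∈ D,
      ψ ε Λ x ≤ |1 - 2 * δ₁| * g Λ + κ / (4 * π) * Real.log Λ + C)
    (hpatch : ∀ ε > (0 : ℝ), ∀ Λ > (1 : ℝ),
      ∀ᵐ x ∂(volume.restrict D), ω ε Λ x = Λ / ε ^ 2 → g Λ ≤ ψ ε Λ x) :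
    ∃ Λ₀ > (1 : ℝ), ∀ Λ ≥ Λ₀, ∀ ε > (0 : ℝ),
      volume {x ∈ D | ω ε Λ x = Λ / ε ^ 2} = 0 :=
  stmt13_general D f g hf_neg hf_mono hg_left hg_right δ₁ hδ₁ hH3 κ C hκ ω ψ hψ_up hpatch
end
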